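/- arXiv:2107.08218 — 3 statements merged into one kernel-verified Lean document; each statement's English description precedes it below -/
import Mathlib

section
/- Let M and A be real numbers with 0 ≤ A and A < M. Let x₁, x₂ ∈ {0,1} and let Z be a real number satisfying Z ≥ 0, Z ≤ (x₁ + x₂)·M, Z ≤ A, and Z ≥ A − (1 − (x₁ + x₂))·M. Then x₁ + x₂ ≤ 1 and Z = (x₁ + x₂)·A. -/
/-!
The upper bound `Z ≤ A` and the big-`M` lower bound `Z ≥ A - (1 - s) M`, with `s = x₁ + x₂`,
force `(s - 1) M ≤ 0`; since `0 ≤ Z ≤ A < M` makes `M` positive, `s ≤ 1`, so `s` is itself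
binary. For a binary `s` the four constraints are the standard linearization of `s * A`:
at `s = 0` they pin `Z` between `0` and `0`, at `s = 1` between `A` and `A`.
-/

lemma le_one_of_le_of_sub_mul_le {s M A Z : ℝ} (hM : 0 < M) (hZA : Z ≤ A)
    (hAZ : A - (1 - s) * M ≤ Z) : s ≤ 1 := by
  have h : (s - 1) * M ≤ 0 := by linarith
  by_contra! hs
  exact h.not_gt (mul_pos (sub_pos.mpr hs) hM)

lemma add_eq_zero_or_eq_one_of_le_one {x₁ x₂ : ℝ} (hx₁ : x₁ = 0 ∨ x₁ = 1)
    (hx₂ : x₂ = 0 ∨ x₂ = 1) (h : x₁ + x₂ ≤ 1) : x₁ + x₂ = 0 ∨ x₁ + x₂ = 1 := by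
  rcases hx₁ with rfl | rfl <;> rcases hx₂ with rfl | rfl <;> norm_num at *

lemma eq_mul_of_bigM_bounds {s M A Z : ℝ} (hs : s = 0 ∨ s = 1) (hZ0 : 0 ≤ Z)
    (hZs : Z ≤ s * M) (hZA : Z ≤ A) (hAZ : A - (1 - s) * M ≤ Z) : Z = s * A := by
  rcases hs with rfl | rfl
  · simp only [zero_mul] at hZs ⊢
    exact le_antisymm hZs hZ0
  · simp only [sub_self, zero_mul, sub_zero, one_mul] at hAZ ⊢
    exact le_antisymm hZA hAZ

theorem arc_linearization_general (M A x₁ x₂ Z : ℝ)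
    (hAM : A < M)
    (hx₁ : x₁ = 0 ∨ x₁ = 1) (hx₂ : x₂ = 0 ∨ x₂ = 1)
    (hZ0 : Z ≥ 0) (hZ1 : Z ≤ (x₁ + x₂) * M) (hZ2 : Z ≤ A)
    (hZ3 : Z ≥ A - (1 - (x₁ + x₂)) * M) :
    x₁ + x₂ ≤ 1 ∧ Z = (x₁ + x₂) * A := by
  have hM : 0 < M := by linarith
  have hs : x₁ + x₂ ≤ 1 := le_one_of_le_of_sub_mul_le hM hZ2 hZ3
  exact ⟨hs, eq_mul_of_bigM_bounds (add_eq_zero_or_eq_one_of_le_one hx₁ hx₂ hs) hZ0 hZ1 hZ2 hZ3⟩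

/-- Constraints (27)–(29) of the PDPSET model for a single arc: the
linear constraints on the dummy variable `Z` both recover the product
`(x₁ + x₂) * A` and forbid `x₁ = x₂ = 1` (a two-node subtour). -/
theorem arc_linearization (M A x₁ x₂ Z : ℝ)
    (hA0 : 0 ≤ A) (hAM : A < M)
    (hx₁ : x₁ = 0 ∨ x₁ = 1) (hx₂ : x₂ = 0 ∨ x₂ = 1)
    (hZ0 : Z ≥ 0) (hZ1 : Z ≤ (x₁ + x₂) * M) (hZ2 : Z ≤ A)
    (hZ3 : Z ≥ A - (1 - (x₁ + x₂)) * M) :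
    x₁ + x₂ ≤ 1 ∧ Z = (x₁ + x₂) * A :=
  arc_linearization_general M A x₁ x₂ Z hAM hx₁ hx₂ hZ0 hZ1 hZ2 hZ3
end

section
/- Fix real numbers M > 0, d_max ≥ 0 with d_max < M, binary variables X_ij, X_ji ∈ {0,1}, nonnegative arrival times T_i, T_j with T_i + t_ij + d_max < M and T_j + t_ji + d_max < M, positive travel times t_ij, t_ji > 0, and dwell times U_i, U_j ∈ [0, d_max]. Suppose there exist real numbers Z_ij, Z_ji, S_ij, S_ji with Z_ij, Z_ji ≥ 0 and 0 ≤ S_ij, S_ji ≤ d_max satisfying: Z_ij − Z_ji = 0; Z_ij ≤ (X_ij + X_ji)·M; Z_ij ≤ T_i + t_ij·X_ij + S_ij; Z_ij ≥ T_i + t_ij·X_ij + S_ij − (1 − (X_ij + X_ji))·M; Z_ji ≤ (X_ij + X_ji)·M; Z_ji ≤ T_j + t_ji·X_ji + S_ji; Z_ji ≥ T_j + t_ji·X_ji + S_ji − (1 − (X_ij + X_ji))·M; S_ij ≤ X_ij·M; S_ij ≤ U_i; S_ij ≥ U_i − (1 − X_ij)·M; S_ji ≤ X_ji·M; S_ji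 ≤ U_j; S_ji ≥ U_j − (1 − X_ji)·M. Then the nonlinear vehicle-time-continuity equation holds: (X_ij + X_ji)·(T_i + t_ij·X_ij + X_ij·U_i) = (X_ij + X_ji)·(T_j + t_ji·X_ji + X_ji·U_j). -/
theorem eq_mul_of_bigM_bounds_s5 {X M S U : ℝ} (hX : X = 0 ∨ X = 1)
    (hS : 0 ≤ S) (hSX : S ≤ X * M) (hSU : S ≤ U) (hUS : U - (1 - X) * M ≤ S) :
    S = X * U := by
  rcases hX with rfl | rfl <;> linarith

/-- The case `X + Y = 2` is infeasible, as it would force `A + M ≤ Z ≤ A`. -/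
theorem add_mul_eq_add_mul_of_bigM_bounds {X Y M Z A : ℝ} (hM : 0 < M)
    (hX : X = 0 ∨ X = 1) (hY : Y = 0 ∨ Y = 1)
    (hZA : Z ≤ A) (hAZ : A - (1 - (X + Y)) * M ≤ Z) :
    (X + Y) * Z = (X + Y) * A := by
  rcases hX with rfl | rfl <;> rcases hY with rfl | rfl
  · ring
  all_goals
    norm_num at hAZ ⊢
    linarith

theorem linear_system_implies_continuity_general
    (M Xij Xji Ti Tj tij tji Ui Uj Zij Zji Sij Sji : ℝ)
    (hM : 0 < M)
    (hXij : Xij = 0 ∨ Xij = 1) (hXji : Xji = 0 ∨ Xji = 1)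
    (hSij0 : 0 ≤ Sij)
    (hSji0 : 0 ≤ Sji)
    (h26 : Zij - Zji = 0)
    (h28 : Zij ≤ Ti + tij * Xij + Sij)
    (h29 : Zij ≥ Ti + tij * Xij + Sij - (1 - (Xij + Xji)) * M)
    (h31 : Zji ≤ Tj + tji * Xji + Sji)
    (h32 : Zji ≥ Tj + tji * Xji + Sji - (1 - (Xij + Xji)) * M)
    (h33 : Sij ≤ Xij * M)
    (h34 : Sij ≤ Ui)
    (h35 : Sij ≥ Ui - (1 - Xij) * M)
    (h33' : Sji ≤ Xji * M)
    (h34' : Sji ≤ Uj)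
    (h35' : Sji ≥ Uj - (1 - Xji) * M) :
    (Xij + Xji) * (Ti + tij * Xij + Xij * Ui)
      = (Xij + Xji) * (Tj + tji * Xji + Xji * Uj) := by
  rw [← eq_mul_of_bigM_bounds_s5 hXij hSij0 h33 h34 h35,
    ← eq_mul_of_bigM_bounds_s5 hXji hSji0 h33' h34' h35',
    ← add_mul_eq_add_mul_of_bigM_bounds hM hXij hXji h28 h29,
    ← add_mul_eq_add_mul_of_bigM_bounds hM hXij hXji h31 h32, sub_eq_zero.mp h26]

/-- One direction of Proposition 1 (single undirected arc, single
vehicle): the linear system (26)–(35) implies the nonlinear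
vehicle-time-continuity equation (25). -/
theorem linear_system_implies_continuity
    (M dmax Xij Xji Ti Tj tij tji Ui Uj Zij Zji Sij Sji : ℝ)
    (hM : 0 < M) (hd0 : 0 ≤ dmax) (hdM : dmax < M)
    (hXij : Xij = 0 ∨ Xij = 1) (hXji : Xji = 0 ∨ Xji = 1)
    (hTi0 : 0 ≤ Ti) (hTj0 : 0 ≤ Tj)
    (hTiM : Ti + tij + dmax < M) (hTjM : Tj + tji + dmax < M)
    (htij : 0 < tij) (htji : 0 < tji)
    (hUi : 0 ≤ Ui ∧ Ui ≤ dmax) (hUj : 0 ≤ Uj ∧ Uj ≤ dmax)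
    (hZij0 : 0 ≤ Zij) (hZji0 : 0 ≤ Zji)
    (hSij0 : 0 ≤ Sij) (hSijd : Sij ≤ dmax)
    (hSji0 : 0 ≤ Sji) (hSjid : Sji ≤ dmax)
    (h26 : Zij - Zji = 0)
    (h27 : Zij ≤ (Xij + Xji) * M)
    (h28 : Zij ≤ Ti + tij * Xij + Sij)
    (h29 : Zij ≥ Ti + tij * Xij + Sij - (1 - (Xij + Xji)) * M)
    (h30 : Zji ≤ (Xij + Xji) * M)
    (h31 : Zji ≤ Tj + tji * Xji + Sji)
    (h32 : Zji ≥ Tj + tji * Xji + Sji - (1 - (Xij + Xji)) * M)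
    (h33 : Sij ≤ Xij * M)
    (h34 : Sij ≤ Ui)
    (h35 : Sij ≥ Ui - (1 - Xij) * M)
    (h33' : Sji ≤ Xji * M)
    (h34' : Sji ≤ Uj)
    (h35' : Sji ≥ Uj - (1 - Xji) * M) :
    (Xij + Xji) * (Ti + tij * Xij + Xij * Ui)
      = (Xij + Xji) * (Tj + tji * Xji + Xji * Uj) :=
  linear_system_implies_continuity_general M Xij Xji Ti Tj tij tji Ui Uj Zij Zji Sij Sji hM hXij
    hXji hSij0 hSji0 h26 h28 h29 h31 h32 h33 h34 h35 h33' h34' h35'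
end

section
/- Fix real numbers M > 0, d_max ≥ 0 with d_max < M, binary variables X_ij, X_ji ∈ {0,1} with X_ij + X_ji ≤ 1, nonnegative arrival times T_i, T_j with T_i + t_ij + d_max < M and T_j + t_ji + d_max < M, positive travel times t_ij, t_ji > 0, and dwell times U_i, U_j ∈ [0, d_max]. If the nonlinear vehicle-time-continuity equation (X_ij + X_ji)·(T_i + t_ij·X_ij + X_ij·U_i) = (X_ij + X_ji)·(T_j + t_ji·X_ji + X_ji·U_j) holds, then there exist real numbers Z_ij, Z_ji, S_ij, S_ji with Z_ij, Z_ji ≥ 0 and 0 ≤ S_ij, S_ji ≤ d_max satisfying: Z_ij − Z_ji = 0; Z_ij ≤ (X_ij + X_ji)·M; Z_ij ≤ T_i + t_ij·X_ij + S_ij; Z_ij ≥ T_i + t_ij·X_ij + S_ij − (1 − (X_ij + X_ji))·M; Z_ji ≤ (X_ij + X_ji)·M; Z_ji ≤ T_j + t_ji·X_ji + S_ji; Z_ji ≥ T_j + t_ji·X_ji + S_ji − (1 − (X_ij + X_ji))·M; S_ij ≤ X_ij·M; S_ij ≤ U_i; S_ij ≥ U_i − (1 − X_ij)·M; S_ji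 ≤ X_ji·M; S_ji ≤ U_j; S_ji ≥ U_j − (1 − X_ji)·M. (Explicitly, taking S_ij = X_ij·U_i, S_ji = X_ji·U_j, Z_ij = (X_ij + X_ji)·(T_i + t_ij·X_ij + S_ij) and Z_ji = (X_ij + X_ji)·(T_j + t_ji·X_ji + S_ji) works.) -/
/-!
Take `S = X * U` and `Z = (X_ij + X_ji) * (T + t X + S)` on each side. Each block of the linear
system is the big-M description of a product `x * y` with `x ∈ {0, 1}` and `0 ≤ y ≤ M`: once with
`x = X`, `y = U`, and once with the binary `x = X_ij + X_ji`, `y = T + t X + S`, where `y ≤ M`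
comes from `T + t + d_max < M`. Equation (25) says exactly that the two values of `Z` agree.
-/

def IsBigMProduct (M x y z : ℝ) : Prop :=
  z ≤ x * M ∧ z ≤ y ∧ y - (1 - x) * M ≤ z

theorem isBigMProduct_mul {M x y : ℝ} (hx : x = 0 ∨ x = 1) (hy0 : 0 ≤ y) (hyM : y ≤ M) :
    IsBigMProduct M x y (x * y) := by
  rcases hx with rfl | rfl <;> refine ⟨?_, ?_, ?_⟩ <;> linarith

theorem binary_add_of_add_le_one {x y : ℝ} (hx : x = 0 ∨ x = 1) (hy : y = 0 ∨ y = 1)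
    (h : x + y ≤ 1) : x + y = 0 ∨ x + y = 1 := by
  rcases hx with rfl | rfl <;> rcases hy with rfl | rfl <;> norm_num at h <;> norm_num

theorem mem_Icc_of_binary {x : ℝ} (hx : x = 0 ∨ x = 1) : x ∈ Set.Icc (0 : ℝ) 1 := by
  rcases hx with rfl | rfl <;> norm_num

section Arrival

variable {x T t U d M : ℝ}

theorem arrival_nonneg (hx : x ∈ Set.Icc (0 : ℝ) 1) (hT : 0 ≤ T) (ht : 0 ≤ t) (hU : 0 ≤ U) :
    0 ≤ T + t * x + x * U := by
  have := mul_nonneg ht hx.1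
  have := mul_nonneg hx.1 hU
  linarith

theorem arrival_lt (hx : x ∈ Set.Icc (0 : ℝ) 1) (ht : 0 ≤ t) (hU0 : 0 ≤ U) (hUd : U ≤ d)
    (hM : T + t + d < M) : T + t * x + x * U < M := by
  have := mul_le_of_le_one_right ht hx.2
  have := mul_le_of_le_one_left hU0 hx.2
  linarith

end Arrival

theorem continuity_implies_linear_system_general
    (M dmax Xij Xji Ti Tj tij tji Ui Uj : ℝ)
    (hXij : Xij = 0 ∨ Xij = 1) (hXji : Xji = 0 ∨ Xji = 1)
    (hsum : Xij + Xji ≤ 1)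
    (hTi0 : 0 ≤ Ti) (hTj0 : 0 ≤ Tj)
    (hTiM : Ti + tij + dmax < M) (hTjM : Tj + tji + dmax < M)
    (htij : 0 < tij) (htji : 0 < tji)
    (hUi : 0 ≤ Ui ∧ Ui ≤ dmax) (hUj : 0 ≤ Uj ∧ Uj ≤ dmax)
    (h25 : (Xij + Xji) * (Ti + tij * Xij + Xij * Ui)
      = (Xij + Xji) * (Tj + tji * Xji + Xji * Uj)) :
    ∃ Zij Zji Sij Sji : ℝ,
      0 ≤ Zij ∧ 0 ≤ Zji ∧
      0 ≤ Sij ∧ Sij ≤ dmax ∧ 0 ≤ Sji ∧ Sji ≤ dmax ∧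
      Zij - Zji = 0 ∧
      Zij ≤ (Xij + Xji) * M ∧
      Zij ≤ Ti + tij * Xij + Sij ∧
      Zij ≥ Ti + tij * Xij + Sij - (1 - (Xij + Xji)) * M ∧
      Zji ≤ (Xij + Xji) * M ∧
      Zji ≤ Tj + tji * Xji + Sji ∧
      Zji ≥ Tj + tji * Xji + Sji - (1 - (Xij + Xji)) * M ∧
      Sij ≤ Xij * M ∧ Sij ≤ Ui ∧ Sij ≥ Ui - (1 - Xij) * M ∧
      Sji ≤ Xji * M ∧ Sji ≤ Uj ∧ Sji ≥ Uj - (1 - Xji) * M := by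
  obtain ⟨hUi0, hUid⟩ := hUi
  obtain ⟨hUj0, hUjd⟩ := hUj
  have hw := binary_add_of_add_le_one hXij hXji hsum
  have hIij := mem_Icc_of_binary hXij
  have hIji := mem_Icc_of_binary hXji
  obtain ⟨hSij₁, hSij₂, hSij₃⟩ := isBigMProduct_mul hXij hUi0 (by linarith : Ui ≤ M)
  obtain ⟨hSji₁, hSji₂, hSji₃⟩ := isBigMProduct_mul hXji hUj0 (by linarith : Uj ≤ M)
  have hIw := mem_Icc_of_binary hw
  have hAi := arrival_nonneg hIij hTi0 htij.le hUi0
  have hAj := arrival_nonneg hIji hTj0 htji.le hUj0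
  obtain ⟨hZij₁, hZij₂, hZij₃⟩ :=
    isBigMProduct_mul hw hAi (arrival_lt hIij htij.le hUi0 hUid hTiM).le
  obtain ⟨hZji₁, hZji₂, hZji₃⟩ :=
    isBigMProduct_mul hw hAj (arrival_lt hIji htji.le hUj0 hUjd hTjM).le
  exact ⟨_, _, Xij * Ui, Xji * Uj, mul_nonneg hIw.1 hAi, mul_nonneg hIw.1 hAj,
    mul_nonneg hIij.1 hUi0, hSij₂.trans hUid, mul_nonneg hIji.1 hUj0, hSji₂.trans hUjd,
    sub_eq_zero.2 h25, hZij₁, hZij₂, hZij₃, hZji₁, hZji₂, hZji₃,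
    hSij₁, hSij₂, hSij₃, hSji₁, hSji₂, hSji₃⟩

/-- Other direction of Proposition 1 (single undirected arc, single
vehicle, feasible case `X_ij + X_ji ≤ 1`): the nonlinear
vehicle-time-continuity equation (25) admits a solution of the
equivalent linear system (26)–(35). -/
theorem continuity_implies_linear_system
    (M dmax Xij Xji Ti Tj tij tji Ui Uj : ℝ)
    (hM : 0 < M) (hd0 : 0 ≤ dmax) (hdM : dmax < M)
    (hXij : Xij = 0 ∨ Xij = 1) (hXji : Xji = 0 ∨ Xji = 1)
    (hsum : Xij + Xji ≤ 1)
    (hTi0 : 0 ≤ Ti) (hTj0 : 0 ≤ Tj)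
    (hTiM : Ti + tij + dmax < M) (hTjM : Tj + tji + dmax < M)
    (htij : 0 < tij) (htji : 0 < tji)
    (hUi : 0 ≤ Ui ∧ Ui ≤ dmax) (hUj : 0 ≤ Uj ∧ Uj ≤ dmax)
    (h25 : (Xij + Xji) * (Ti + tij * Xij + Xij * Ui)
      = (Xij + Xji) * (Tj + tji * Xji + Xji * Uj)) :
    ∃ Zij Zji Sij Sji : ℝ,
      0 ≤ Zij ∧ 0 ≤ Zji ∧
      0 ≤ Sij ∧ Sij ≤ dmax ∧ 0 ≤ Sji ∧ Sji ≤ dmax ∧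
      Zij - Zji = 0 ∧
      Zij ≤ (Xij + Xji) * M ∧
      Zij ≤ Ti + tij * Xij + Sij ∧
      Zij ≥ Ti + tij * Xij + Sij - (1 - (Xij + Xji)) * M ∧
      Zji ≤ (Xij + Xji) * M ∧
      Zji ≤ Tj + tji * Xji + Sji ∧
      Zji ≥ Tj + tji * Xji + Sji - (1 - (Xij + Xji)) * M ∧
      Sij ≤ Xij * M ∧ Sij ≤ Ui ∧ Sij ≥ Ui - (1 - Xij) * M ∧
      Sji ≤ Xji * M ∧ Sji ≤ Uj ∧ Sji ≥ Uj - (1 - Xji) * M :=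
  continuity_implies_linear_system_general M dmax Xij Xji Ti Tj tij tji Ui Uj hXij hXji hsum hTi0
    hTj0 hTiM hTjM htij htji hUi hUj h25
end
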